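/- (Simple-type universal coefficients, U-computation) In the setting of the previous statement, the coefficient U(α_1,…,α_n; τ₋, τ₊) — defined as ∑ over (τ₋,τ₊)-permissible double groupings 0=a_0<a_1<⋯<a_m=n, 0=b_0<b_1<⋯<b_l=m of ((-1)^{l-1}/l) ∏_{j=1}^l S(β-blocks; τ₋,τ₊) ∏_{i=1}^m 1/(a_i - a_{i-1})!, where a grouping is τ₋-permissible if each β-block has constant τ₋ equal to its entries' τ₋, and τ₊-permissible if each γ-block has τ₊ equal to τ₊ of the total — equals (-1)^{i-1}/((n-i)!(i-1)!) when α_i ∈ A and α_j ∈ B for all j ≠ i, and in the extreme cases: if i = n, U = ∑ over 0=a_0<⋯<a_{m-1}=n-1 of (-1)^{m-1} ∏ 1/(a_k-a_{k-1})! = (-1)^{n-1}/(n-1)!. -/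

import Mathlib

/-- Joyce's universal coefficient `S(α_1, …, α_n; τ₋, τ₊)` for a tuple, encoded as a list
`l = [α_1, …, α_n]`: if for every `j ∈ {1, …, n-1}` either
(a) `τ₋(α_j) ≤ τ₋(α_{j+1})` and `τ₊(α_1 + ⋯ + α_j) > τ₊(α_{j+1} + ⋯ + α_n)`, or
(b) `τ₋(α_j) > τ₋(α_{j+1})` and `τ₊(α_1 + ⋯ + α_j) ≤ τ₊(α_{j+1} + ⋯ + α_n)`,
then `S = (-1)^{#{j : case (a) holds}}`; otherwise `S = 0`. -/
def Scoef {C O : Type*} [AddCommMonoid C] [LinearOrder O]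
    (τm τp : C → O) (l : List C) : ℚ :=
  if (∀ j ∈ Finset.Icc 1 (l.length - 1),
        (τm (l.getD (j - 1) 0) ≤ τm (l.getD j 0) ∧ τp (l.drop j).sum < τp (l.take j).sum) ∨
        (τm (l.getD j 0) < τm (l.getD (j - 1) 0) ∧ τp (l.take j).sum ≤ τp (l.drop j).sum))
  then (-1) ^ ((Finset.Icc 1 (l.length - 1)).filter (fun j =>
        τm (l.getD (j - 1) 0) ≤ τm (l.getD j 0) ∧ τp (l.drop j).sum < τp (l.take j).sum)).card
  else 0

/-- Joyce's universal coefficient `U(α_1, …, α_n; τ₋, τ₊)`: the sum over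
`(τ₋, τ₊)`-permissible double groupings — a composition `c` of `n`
(`0 = a_0 < a_1 < ⋯ < a_m = n`, producing `β`-blocks of the `α`'s with sums `β_i`) together
with a composition `c'` of `m` (`0 = b_0 < b_1 < ⋯ < b_l = m`, producing `γ`-blocks of the
`β`'s) — of `((-1)^{l-1}/l) · ∏_{j=1}^l S(β_{b_{j-1}+1}, …, β_{b_j}; τ₋, τ₊)
· ∏_{i=1}^m 1/(a_i - a_{i-1})!`.  A double grouping is `τ₋`-permissible if each `α`-entry
of every `β`-block has `τ₋` equal to that of the block sum, and `τ₊`-permissible if every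
`γ`-block sum has `τ₊` equal to `τ₊` of the total. -/
def Ucoef {C O : Type*} [AddCommMonoid C] [LinearOrder O]
    (τm τp : C → O) (l : List C) : ℚ :=
  ∑ c : Composition l.length, ∑ c' : Composition c.length,
    if (∀ blk ∈ l.splitWrtComposition c, ∀ x ∈ blk, τm x = τm blk.sum) ∧
        (∀ gblk ∈ ((l.splitWrtComposition c).map List.sum).splitWrtComposition c',
          τp gblk.sum = τp l.sum)
    then ((-1) ^ (c'.length - 1) / (c'.length : ℚ)) *
        ((((l.splitWrtComposition c).map List.sum).splitWrtComposition c').map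
          (Scoef τm τp)).prod *
        ((l.splitWrtComposition c).map fun blk => ((blk.length.factorial : ℚ))⁻¹).prod
    else 0


open List Finset

section ListAux

variable {α : Type*}

lemma SA_append (ns ms : List ℕ) : ∀ (l : List α),
    l.splitWrtCompositionAux (ns ++ ms)
      = (l.take ns.sum).splitWrtCompositionAux ns
        ++ (l.drop ns.sum).splitWrtCompositionAux ms := by
  induction ns with
  | nil => intro l; simp [List.splitWrtCompositionAux]
  | cons n ns IH =>
    intro l
    simp only [List.cons_append, List.splitWrtCompositionAux_cons, List.sum_cons]
    rw [IH (l.drop n)]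
    congr 1
    · rw [List.take_take, min_eq_left (Nat.le_add_right _ _)]
    congr 2
    · rw [List.drop_take]; congr 1; omega
    · rw [List.drop_drop, Nat.add_comm]

lemma SA_block_ne_nil {ns : List ℕ} (hpos : ∀ a ∈ ns, 0 < a) :
    ∀ {l : List α}, ns.sum ≤ l.length → ∀ b ∈ l.splitWrtCompositionAux ns, b ≠ [] := by
  induction ns with
  | nil => intro l _ b hb; simp [List.splitWrtCompositionAux] at hb
  | cons n ns IH =>
    intro l hsum b hb
    simp only [List.splitWrtCompositionAux_cons, List.mem_cons] at hb
    rcases hb with rfl | hb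
    · have h1 : 0 < n := hpos n (by simp)
      have h2 : 0 < l.length := by simp only [List.sum_cons] at hsum; omega
      rw [← List.length_pos_iff_ne_nil, List.length_take]
      omega
    · exact IH (fun a ha => hpos a (by simp [ha])) (by simp only [List.sum_cons] at hsum; simp [List.length_drop]; omega) b hb

lemma split_point : ∀ (bs : List (List α)) (l1 l2 : List α) (x : α),
    bs.flatten = l1 ++ x :: l2 →
    ∃ P m1 m2 Q, bs = P ++ (m1 ++ x :: m2) :: Q ∧ P.flatten ++ m1 = l1 ∧ m2 ++ Q.flatten = l2 := by
  intro bs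
  induction bs with
  | nil => intro l1 l2 x h; simp at h
  | cons b bs IH =>
    intro l1 l2 x h
    simp only [List.flatten_cons] at h
    rcases List.append_eq_append_iff.1 h with ⟨a', ha1, ha2⟩ | ⟨c', hc1, hc2'⟩
    · -- l1 = b ++ a', bs.flatten = a' ++ x :: l2
      obtain ⟨P, m1, m2, Q, h1, h2, h3⟩ := IH a' l2 x ha2
      exact ⟨b :: P, m1, m2, Q, by simp [h1], by simp [h2, ha1], h3⟩
    · -- b = l1 ++ c', c' ++ bs.flatten = x :: l2
      have hc2 : c' ++ bs.flatten = x :: l2 := hc2'.symm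
      cases c' with
      | nil =>
        simp only [List.nil_append] at hc2
        obtain ⟨P, m1, m2, Q, h1, h2, h3⟩ := IH [] l2 x (by simpa using hc2)
        refine ⟨b :: P, m1, m2, Q, by simp [h1], ?_, h3⟩
        have h4 := List.append_eq_nil_iff.1 h2
        simp [h4.1, h4.2, hc1]
      | cons y t =>
        simp only [List.cons_append, List.cons.injEq] at hc2
        obtain ⟨rfl, ht⟩ := hc2
        exact ⟨[], l1, t, bs, by simp [hc1], by simp, ht⟩

lemma flatten_ne_nil_aux {L : List (List α)} (h1 : L ≠ []) (h2 : ∀ b ∈ L, b ≠ []) :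
    L.flatten ≠ [] := by
  cases L with
  | nil => exact absurd rfl h1
  | cons b t =>
    simp only [List.flatten_cons, ne_eq, List.append_eq_nil_iff, not_and]
    intro hb
    exact absurd hb (h2 b (by simp))

end ListAux

section CompAux

open List Finset

lemma comp_zero_blocks (c : Composition 0) : c.blocks = [] := by
  cases hb : c.blocks with
  | nil => rfl
  | cons b t =>
    have hsum := c.blocks_sum
    have hpos := c.one_le_blocks (i := b) (by rw [hb]; simp)
    rw [hb] at hsum
    simp only [List.sum_cons] at hsum
    omega

lemma comp_pos_blocks_ne_nil {k : ℕ} (hk : 0 < k) (c : Composition k) : c.blocks ≠ [] := by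
  intro h
  have := c.blocks_sum
  rw [h] at this
  simp at this
  omega

noncomputable def Ew (k : ℕ) : ℚ :=
  ∑ c : Composition k, (-1 : ℚ) ^ c.length * (c.blocks.map fun b => ((b.factorial : ℚ))⁻¹).prod

lemma Ew_zero : Ew 0 = 1 := by
  rw [Ew]
  have h : ∀ c : Composition 0,
      (-1 : ℚ) ^ c.length * (c.blocks.map fun b => ((b.factorial : ℚ))⁻¹).prod = 1 := by
    intro c
    have := comp_zero_blocks c
    simp [Composition.length, this]
  rw [Finset.sum_congr rfl (fun c _ => h c), Finset.sum_const, Finset.card_univ,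
    composition_card]
  norm_num

lemma Ew_succ (k : ℕ) :
    Ew (k + 1) = ∑ a ∈ Finset.range (k + 1), (-(((a + 1).factorial : ℚ))⁻¹) * Ew (k - a) := by
  rw [Ew]
  simp only [Ew, Finset.mul_sum]
  rw [Finset.sum_sigma']
  refine (Finset.sum_bij (fun (p : (a : ℕ) × Composition (k - a)) (hp : p ∈ (Finset.range (k+1)).sigma fun a => Finset.univ) =>
      (⟨(p.1 + 1) :: p.2.blocks, ?_, ?_⟩ : Composition (k + 1))) ?_ ?_ ?_ ?_).symm
  · -- positivity
    intro i hi
    rcases List.mem_cons.1 hi with rfl | hi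
    · omega
    · exact p.2.blocks_pos hi
  · -- sum
    have := p.2.blocks_sum
    have hle : p.1 ≤ k := by
      have := Finset.mem_sigma.1 hp
      have := Finset.mem_range.1 this.1
      omega
    simp only [List.sum_cons, this]
    omega
  · intro p hp; exact Finset.mem_univ _
  · -- injective
    intro p hp q hq h
    have hb : (p.1 + 1) :: p.2.blocks = (q.1 + 1) :: q.2.blocks := congrArg Composition.blocks h
    have h1 : p.1 = q.1 := by simpa using congrArg List.headI hb
    have h2 : p.2.blocks = q.2.blocks := by simpa using congrArg List.tail hb
    obtain ⟨a, d⟩ := p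
    obtain ⟨a', d'⟩ := q
    simp only at h1 h2
    subst h1
    have : d = d' := Composition.ext h2
    rw [this]
  · -- surjective
    intro c _
    have hne : c.blocks ≠ [] := comp_pos_blocks_ne_nil k.succ_pos c
    obtain ⟨b, t, hb⟩ := List.exists_cons_of_ne_nil hne
    have hb1 : 1 ≤ b := c.one_le_blocks (by rw [hb]; simp)
    have hble : b ≤ k + 1 := by
      have hsum := c.blocks_sum
      rw [hb] at hsum
      simp only [List.sum_cons] at hsum
      omega
    have hsum := c.blocks_sum
    rw [hb] at hsum
    simp only [List.sum_cons] at hsum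
    refine ⟨⟨b - 1, ⟨t, ?_, ?_⟩⟩, ?_, ?_⟩
    · intro i hi
      exact c.blocks_pos (by rw [hb]; exact List.mem_cons_of_mem _ hi)
    · omega
    · simp only [Finset.mem_sigma, Finset.mem_range, Finset.mem_univ, and_true]
      omega
    · refine Composition.ext ?_
      show (b - 1 + 1) :: t = c.blocks
      rw [hb]
      congr 1
      omega
  · -- values
    intro p hp
    simp only [Composition.length, List.length_cons, List.map_cons, List.prod_cons, pow_succ]
    ring

end CompAux

section CompAux2

open List Finset

lemma choose_alt (k : ℕ) :
    ∑ a ∈ Finset.range (k + 1), ((-1 : ℚ)) ^ a * (((k + 1).choose (a + 1) : ℕ) : ℚ) = 1 := by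
  have h := Int.alternating_sum_range_choose (n := k + 1)
  rw [Finset.sum_range_succ'] at h
  rw [if_neg (Nat.succ_ne_zero k)] at h
  have h2 : (∑ a ∈ Finset.range (k + 1), ((-1 : ℤ)) ^ a * ((k + 1).choose (a + 1) : ℤ)) = 1 := by
    have hc : ∀ a ∈ Finset.range (k+1), ((-1 : ℤ)) ^ (a + 1) * ((k + 1).choose (a + 1) : ℤ)
        = -(((-1 : ℤ)) ^ a * ((k + 1).choose (a + 1) : ℤ)) := fun a _ => by ring
    rw [Finset.sum_congr rfl hc, Finset.sum_neg_distrib] at h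
    simp only [pow_zero, one_mul, Nat.choose_zero_right, Nat.cast_one] at h
    linarith
  exact_mod_cast h2

lemma Ew_eq (k : ℕ) : Ew k = (-1 : ℚ) ^ k / (k.factorial : ℚ) := by
  induction k using Nat.strong_induction_on with
  | _ k IH =>
    match k with
    | 0 => simpa using Ew_zero
    | (k + 1) =>
      rw [Ew_succ]
      have hc : ∀ a ∈ Finset.range (k + 1), (-(((a + 1).factorial : ℚ))⁻¹) * Ew (k - a)
          = ((-1 : ℚ) ^ (k + 1) / (((k + 1).factorial : ℚ)))
            * (((-1 : ℚ)) ^ a * (((k + 1).choose (a + 1) : ℕ) : ℚ)) := by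
        intro a ha
        have hak : a ≤ k := by
          have := Finset.mem_range.1 ha
          omega
        rw [IH (k - a) (by omega)]
        have hsub : k + 1 - (a + 1) = k - a := by omega
        rw [Nat.cast_choose ℚ (by omega : a + 1 ≤ k + 1), hsub]
        have h1 : ((-1 : ℚ)) ^ k * (-1 : ℚ) ^ a = (-1 : ℚ) ^ (k - a) := by
          rw [← pow_add]
          have h2 : k + a = (k - a) + 2 * a := by omega
          rw [h2, pow_add, pow_mul]
          norm_num
        have f1 : (((a + 1).factorial : ℕ) : ℚ) ≠ 0 := Nat.cast_ne_zero.2 (Nat.factorial_ne_zero _)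
        have f2 : (((k - a).factorial : ℕ) : ℚ) ≠ 0 := Nat.cast_ne_zero.2 (Nat.factorial_ne_zero _)
        have f3 : (((k + 1).factorial : ℕ) : ℚ) ≠ 0 := Nat.cast_ne_zero.2 (Nat.factorial_ne_zero _)
        rw [← h1]
        field_simp
        ring
      rw [Finset.sum_congr rfl hc, ← Finset.mul_sum, choose_alt, mul_one]

lemma shortComp (k : ℕ) :
    (∑ c : Composition k,
      if c.length ≤ 1 then (c.blocks.map fun b => ((b.factorial : ℚ))⁻¹).prod else 0)
      = ((k.factorial : ℚ))⁻¹ := by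
  match k with
  | 0 =>
    have h : ∀ c : Composition 0,
        (if c.length ≤ 1 then (c.blocks.map fun b => ((b.factorial : ℚ))⁻¹).prod else 0) = 1 := by
      intro c
      have := comp_zero_blocks c
      simp [Composition.length, this]
    rw [Finset.sum_congr rfl (fun c _ => h c), Finset.sum_const, Finset.card_univ,
      composition_card]
    norm_num
  | (m + 1) =>
    rw [Finset.sum_eq_single (Composition.single (m + 1) (Nat.succ_pos m))]
    · have h1 := Composition.single_length (Nat.succ_pos m)
      have h2 := Composition.single_blocks (Nat.succ_pos m)
      rw [if_pos (le_of_eq h1), h2]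
      simp
    · intro c _ hne
      rw [if_neg]
      intro hle
      have h1 : 0 < c.length := c.length_pos_of_pos (Nat.succ_pos m)
      have h2 : c.length = 1 := by omega
      exact hne ((Composition.eq_single_iff_length (Nat.succ_pos m)).2 h2)
    · intro h
      exact absurd (Finset.mem_univ _) h

end CompAux2

section Main

open List Finset

variable {C O : Type*} [AddCommMonoid C] [LinearOrder O]
variable {τm τp : C → O} {A B : Set C} {am bm ap bp : O}

lemma tauB (h : ∀ s : Multiset C, s ≠ 0 → (∀ y ∈ s, y ∈ B) → τm s.sum = bm)
    (u : List C) (hu : u ≠ []) (hB : ∀ y ∈ u, y ∈ B) : τm u.sum = bm := by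
  have h1 : ((u : Multiset C)).sum = u.sum := by simp
  rw [← h1]
  exact h _ (by simpa using hu) (by simpa using hB)

lemma tauA (h : ∀ x ∈ A, ∀ s : Multiset C, (∀ y ∈ s, y ∈ B) → τp (x + s.sum) = ap)
    (x : C) (hx : x ∈ A) (u v : List C)
    (hu : ∀ y ∈ u, y ∈ B) (hv : ∀ y ∈ v, y ∈ B) :
    τp (u.sum + (x + v.sum)) = ap := by
  have h1 : u.sum + (x + v.sum) = x + (u ++ v).sum := by
    rw [List.sum_append]
    exact add_left_comm _ _ _
  have h2 : (((u ++ v : List C) : Multiset C)).sum = (u ++ v).sum := by simp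
  rw [h1, ← h2]
  refine h x hx _ ?_
  intro y hy
  rcases List.mem_append.1 (by simpa using hy) with hy | hy
  exacts [hu y hy, hv y hy]

lemma tauA0 (h : ∀ x ∈ A, ∀ s : Multiset C, (∀ y ∈ s, y ∈ B) → τp (x + s.sum) = ap)
    (x : C) (hx : x ∈ A) : τp x = ap := by
  have := tauA h x hx [] [] (by simp) (by simp)
  simpa using this

lemma exists_B_rep : ∀ (L : List C), L ≠ [] →
    (∀ y ∈ L, ∃ u : List C, u ≠ [] ∧ (∀ z ∈ u, z ∈ B) ∧ u.sum = y) →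
    ∃ u : List C, u ≠ [] ∧ (∀ z ∈ u, z ∈ B) ∧ u.sum = L.sum := by
  intro L
  induction L with
  | nil => intro h; exact absurd rfl h
  | cons a L IH =>
    intro _ h
    obtain ⟨ua, hua1, hua2, hua3⟩ := h a (by simp)
    cases L with
    | nil => exact ⟨ua, hua1, hua2, by simpa using hua3⟩
    | cons b L' =>
      obtain ⟨u', h1, h2, h3⟩ := IH (by simp) (fun y hy => h y (List.mem_cons_of_mem _ hy))
      refine ⟨ua ++ u', by simp [hua1], ?_, ?_⟩
      · intro z hz
        rcases List.mem_append.1 hz with hz | hz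
        exacts [hua2 z hz, h2 z hz]
      · rw [List.sum_append, hua3, h3]
        simp

lemma scoef_eval
    (hm : bm < am) (hp : ap < bp)
    (habsorbm : ∀ x ∈ A, ∀ s : Multiset C, (∀ y ∈ s, y ∈ B) → τm (x + s.sum) = am)
    (habsorbp : ∀ x ∈ A, ∀ s : Multiset C, (∀ y ∈ s, y ∈ B) → τp (x + s.sum) = ap)
    (hBm : ∀ s : Multiset C, s ≠ 0 → (∀ y ∈ s, y ∈ B) → τm s.sum = bm)
    (hBp : ∀ s : Multiset C, s ≠ 0 → (∀ y ∈ s, y ∈ B) → τp s.sum = bp)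
    (x : C) (hx : x ∈ A)
    (P Q : List (List C))
    (hPne : ∀ b ∈ P, b ≠ []) (hPB : ∀ b ∈ P, ∀ y ∈ b, y ∈ B)
    (hQne : ∀ b ∈ Q, b ≠ []) (hQB : ∀ b ∈ Q, ∀ y ∈ b, y ∈ B) :
    Scoef τm τp ((P ++ [x] :: Q).map List.sum)
      = if Q.length ≤ 1 then (-1 : ℚ) ^ P.length else 0 := by
  have hLform : (P ++ [x] :: Q).map List.sum
      = P.map List.sum ++ x :: Q.map List.sum := by simp
  rw [hLform]
  set PS := P.map List.sum with hPS
  set QS := Q.map List.sum with hQS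
  set p := P.length with hp'
  set q := Q.length with hq'
  set L := PS ++ x :: QS with hLdef
  have hPSlen : PS.length = p := by simp [hPS, hp']
  have hQSlen : QS.length = q := by simp [hQS, hq']
  have hLlen : L.length = p + q + 1 := by simp [hLdef, hPSlen, hQSlen]; omega
  -- τm of entries
  have hgB : ∀ k, k < L.length → k ≠ p → τm (L.getD k 0) = bm := by
    intro k hk hkp
    rw [List.getD_eq_getElem L 0 hk]
    rcases Nat.lt_or_ge k p with hlt | hge
    · have hkP : k < PS.length := by omega
      have e1 : L[k]'hk = PS[k]'hkP := List.getElem_append_left hkP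
      have hkP' : k < P.length := by omega
      have e2 : PS[k]'hkP = (P[k]'hkP').sum := by
        simp [hPS]
      rw [e1, e2]
      exact tauB hBm _ (hPne _ (List.getElem_mem hkP')) (hPB _ (List.getElem_mem hkP'))
    · have hgt : p < k := by omega
      obtain ⟨t, rfl⟩ : ∃ t, k = p + 1 + t := ⟨k - p - 1, by omega⟩
      have hPS_le : PS.length ≤ p + 1 + t := by omega
      have e1 : L[p + 1 + t]'hk = (x :: QS)[p + 1 + t - PS.length]'(by
          simp [hLdef] at hk ⊢; omega) := List.getElem_append_right hPS_le
      have e2 : p + 1 + t - PS.length = t + 1 := by omega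
      have htq : t < Q.length := by omega
      rw [e1]
      have e3 : (x :: QS)[p + 1 + t - PS.length]'(by simp [hLdef] at hk ⊢; omega)
          = QS[t]'(by omega) := by
        simp only [e2]
        exact List.getElem_cons_succ ..
      rw [e3]
      have e4 : QS[t]'(by omega) = (Q[t]'htq).sum := by simp [hQS]
      rw [e4]
      exact tauB hBm _ (hQne _ (List.getElem_mem htq)) (hQB _ (List.getElem_mem htq))
  have hgA : p < L.length → τm (L.getD p 0) = am := by
    intro hk
    rw [List.getD_eq_getElem L 0 hk]
    have e1 : L[p]'hk = (x :: QS)[p - PS.length]'(by simp [hLdef] at hk ⊢; omega) :=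
      List.getElem_append_right (by omega)
    have e2 : p - PS.length = 0 := by omega
    rw [e1]
    have e3 : (x :: QS)[p - PS.length]'(by simp [hLdef] at hk ⊢; omega) = x := by
      simp only [e2]
      rfl
    rw [e3]
    have := habsorbm x hx 0 (by simp)
    simpa using this
  -- entries of P/Q flatten are in B
  have hPfB : ∀ (R : List (List C)), (∀ b ∈ R, b ∈ P ∨ b ∈ Q) → ∀ y ∈ R.flatten, y ∈ B := by
    intro R hR y hy
    obtain ⟨b, hb, hyb⟩ := List.mem_flatten.1 hy
    rcases hR b hb with h | h
    exacts [hPB b h y hyb, hQB b h y hyb]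
  -- τp facts
  have htakeB : ∀ j, 1 ≤ j → j ≤ p → τp ((L.take j).sum) = bp := by
    intro j h1 h2
    have e1 : L.take j = PS.take j := by
      rw [hLdef, List.take_append]
      have : j - PS.length = 0 := by omega
      rw [this]
      simp
    have e2 : PS.take j = (P.take j).map List.sum := by
      rw [hPS, List.map_take]
    have e3 : ((P.take j).map List.sum).sum = (P.take j).flatten.sum :=
      (List.sum_flatten).symm
    rw [e1, e2, e3]
    have hne : (P.take j).flatten ≠ [] := by
      apply flatten_ne_nil_aux
      · have : (P.take j).length = j := by simp; omega
        intro hnil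
        rw [hnil] at this
        simp at this
        omega
      · intro b hb
        exact hPne b (List.mem_of_mem_take hb)
    refine tauB hBp _ hne ?_
    exact hPfB _ (fun b hb => Or.inl (List.mem_of_mem_take hb))
  have hdropA : ∀ j, j ≤ p → τp ((L.drop j).sum) = ap := by
    intro j h2
    have e1 : L.drop j = PS.drop j ++ x :: QS := by
      rw [hLdef, List.drop_append]
      have : j - PS.length = 0 := by omega
      rw [this]
      simp
    rw [e1, List.sum_append, List.sum_cons]
    have e2 : (PS.drop j).sum = (P.drop j).flatten.sum := by
      rw [hPS, ← List.map_drop, ← List.sum_flatten]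
    have e3 : QS.sum = Q.flatten.sum := by
      rw [hQS, ← List.sum_flatten]
    rw [e2, e3]
    refine tauA habsorbp x hx _ _ ?_ ?_
    · exact hPfB _ (fun b hb => Or.inl (List.mem_of_mem_drop hb))
    · exact hPfB _ (fun b hb => Or.inr hb)
  have htakeA : ∀ j, p < j → τp ((L.take j).sum) = ap := by
    intro j h1
    obtain ⟨t, rfl⟩ : ∃ t, j = p + 1 + t := ⟨j - p - 1, by omega⟩
    have e1 : L.take (p + 1 + t) = PS ++ x :: QS.take t := by
      rw [hLdef, List.take_append]
      have h3 : p + 1 + t - PS.length = t + 1 := by omega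
      rw [h3, List.take_of_length_le (by omega), List.take_succ_cons]
    rw [e1, List.sum_append, List.sum_cons]
    have e2 : PS.sum = P.flatten.sum := by rw [hPS, ← List.sum_flatten]
    have e3 : (QS.take t).sum = (Q.take t).flatten.sum := by
      rw [hQS, ← List.map_take, ← List.sum_flatten]
    rw [e2, e3]
    refine tauA habsorbp x hx _ _ ?_ ?_
    · exact hPfB _ (fun b hb => Or.inl hb)
    · exact hPfB _ (fun b hb => Or.inr (List.mem_of_mem_take hb))
  have hdropB : ∀ j, p < j → j < L.length → τp ((L.drop j).sum) = bp := by
    intro j h1 h2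
    obtain ⟨t, rfl⟩ : ∃ t, j = p + 1 + t := ⟨j - p - 1, by omega⟩
    have e1 : L.drop (p + 1 + t) = QS.drop t := by
      rw [hLdef, List.drop_append]
      have h3 : p + 1 + t - PS.length = t + 1 := by omega
      rw [h3, List.drop_eq_nil_of_le (by omega), List.drop_succ_cons]
      simp
    have e2 : (QS.drop t).sum = (Q.drop t).flatten.sum := by
      rw [hQS, ← List.map_drop, ← List.sum_flatten]
    rw [e1, e2]
    have htq : t < q := by omega
    have hne : (Q.drop t).flatten ≠ [] := by
      apply flatten_ne_nil_aux
      · have : (Q.drop t).length = q - t := by simp [hq']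
        intro hnil
        rw [hnil] at this
        simp at this
        omega
      · intro b hb
        exact hQne b (List.mem_of_mem_drop hb)
    refine tauB hBp _ hne ?_
    exact hPfB _ (fun b hb => Or.inr (List.mem_of_mem_drop hb))
  -- now evaluate Scoef
  rw [Scoef, hLlen]
  have hrange : p + q + 1 - 1 = p + q := by omega
  rw [hrange]
  by_cases hq2 : q ≤ 1
  · have hcond : ∀ j ∈ Finset.Icc 1 (p + q),
        (τm (L.getD (j - 1) 0) ≤ τm (L.getD j 0) ∧ τp (L.drop j).sum < τp (L.take j).sum) ∨
        (τm (L.getD j 0) < τm (L.getD (j - 1) 0) ∧ τp (L.take j).sum ≤ τp (L.drop j).sum) := by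
      intro j hj
      rw [Finset.mem_Icc] at hj
      rcases Nat.lt_or_ge p j with hgt | hle
      · -- j = p + 1, case (b)
        have hj' : j = p + 1 := by omega
        subst hj'
        right
        simp only [Nat.add_sub_cancel]
        constructor
        · rw [hgA (by omega), hgB (p + 1) (by omega) (by omega)]
          exact hm
        · rw [htakeA (p + 1) (by omega), hdropB (p + 1) (by omega) (by omega)]
          exact le_of_lt hp
      · left
        constructor
        · rw [hgB (j - 1) (by omega) (by omega)]
          rcases Nat.lt_or_ge j p with hlt | hge
          · rw [hgB j (by omega) (by omega)]
          · have hj' : j = p := by omega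
            rw [hj', hgA (by omega)]
            exact le_of_lt hm
        · rw [htakeB j hj.1 hle, hdropA j hle]
          exact hp
    rw [if_pos hcond, if_pos hq2]
    -- compute the filter
    have hfilter : (Finset.Icc 1 (p + q)).filter (fun j =>
            τm (L.getD (j - 1) 0) ≤ τm (L.getD j 0) ∧ τp (L.drop j).sum < τp (L.take j).sum)
          = Finset.Icc 1 p := by
        ext j
        simp only [Finset.mem_filter, Finset.mem_Icc]
        constructor
        · rintro ⟨⟨hj1, hj2⟩, hcond⟩
          refine ⟨hj1, ?_⟩
          by_contra hgt
          push_neg at hgt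
          -- j = p + 1 (since j ≤ p + q ≤ p + 1)
          have hj : j = p + 1 := by omega
          subst hj
          have h1 : τm (L.getD p 0) = am := hgA (by omega)
          have h2 : τm (L.getD (p + 1) 0) = bm := hgB (p + 1) (by omega) (by omega)
          rw [show p + 1 - 1 = p from by omega, h1, h2] at hcond
          exact absurd hcond.1 (not_le.2 hm)
        · rintro ⟨hj1, hj2⟩
          refine ⟨⟨hj1, by omega⟩, ?_, ?_⟩
          · have h1 : τm (L.getD (j - 1) 0) = bm := hgB (j - 1) (by omega) (by omega)
            rw [h1]
            rcases Nat.lt_or_ge j p with hlt | hge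
            · rw [hgB j (by omega) (by omega)]
            · have hj : j = p := by omega
              rw [hj, hgA (by omega)]
              exact le_of_lt hm
          · rw [htakeB j hj1 hj2, hdropA j hj2]
            exact hp
    rw [hfilter, Nat.card_Icc]
    norm_num
  · have hcond : ¬ ∀ j ∈ Finset.Icc 1 (p + q),
        (τm (L.getD (j - 1) 0) ≤ τm (L.getD j 0) ∧ τp (L.drop j).sum < τp (L.take j).sum) ∨
        (τm (L.getD j 0) < τm (L.getD (j - 1) 0) ∧ τp (L.take j).sum ≤ τp (L.drop j).sum) := by
      intro hall
      have hj : p + 2 ∈ Finset.Icc 1 (p + q) := by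
        rw [Finset.mem_Icc]
        omega
      rcases hall (p + 2) hj with ⟨_, hc⟩ | ⟨hc, _⟩
      · rw [htakeA (p + 2) (by omega), hdropB (p + 2) (by omega) (by omega)] at hc
        exact absurd hc (not_lt.2 (le_of_lt hp))
      · rw [show p + 2 - 1 = p + 1 from rfl] at hc
        rw [hgB (p + 2) (by omega) (by omega), hgB (p + 1) (by omega) (by omega)] at hc
        exact absurd hc (lt_irrefl _)
    rw [if_neg hcond, if_neg hq2]

end Main

section Thm

open List Finset

lemma concat_blocks_inj {b1 b2 b1' b2' : List ℕ}
    (h : b1 ++ 1 :: b2 = b1' ++ 1 :: b2')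
    (hpos : ∀ a ∈ b1, 0 < a) (hpos' : ∀ a ∈ b1', 0 < a)
    (hs : b1.sum = b1'.sum) : b1 = b1' ∧ b2 = b2' := by
  rcases List.append_eq_append_iff.1 h with ⟨a', ha1, ha2⟩ | ⟨c', hc1, hc2⟩
  · -- b1' = b1 ++ a', 1 :: b2 = a' ++ 1 :: b2'
    have hsum : a'.sum = 0 := by
      rw [ha1, List.sum_append] at hs
      omega
    have ha' : a' = [] := by
      cases a' with
      | nil => rfl
      | cons y t =>
        have hy : 0 < y := hpos' y (by rw [ha1]; simp)
        simp only [List.sum_cons] at hsum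
        omega
    subst ha'
    rw [List.nil_append] at ha2
    simp only [List.append_nil] at ha1
    exact ⟨ha1.symm, by injection ha2⟩
  · have hsum : c'.sum = 0 := by
      rw [hc1, List.sum_append] at hs
      omega
    have hc' : c' = [] := by
      cases c' with
      | nil => rfl
      | cons y t =>
        have hy : 0 < y := hpos y (by rw [hc1]; simp)
        simp only [List.sum_cons] at hsum
        omega
    subst hc'
    simp only [List.append_nil] at hc1
    rw [List.nil_append] at hc2
    refine ⟨hc1, ?_⟩
    injection hc2 with h1 h2
    exact h2.symm

/-- **simple-type `U`-computation.**  In the setting of the `S`-computation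
(disjoint class sets `A, B` with `τ₋(A) > τ₋(B)`, `τ₊(A) < τ₊(B)`, `B`-classes absorbed
slope-wise into sums containing an `A`-class), for a tuple `(α_1, …, α_n)` with exactly one
entry `α_{i₀} ∈ A` and all others in `B`:
`U(α_1, …, α_n; τ₋, τ₊) = (-1)^{i₀-1} / ((n - i₀)! (i₀ - 1)!)`. -/
theorem stmt_18 {C O : Type*} [AddCommMonoid C] [LinearOrder O]
    (τm τp : C → O) (A B : Set C) (hAB : Disjoint A B)
    (am bm ap bp : O) (hm : bm < am) (hp : ap < bp)
    (habsorbm : ∀ x ∈ A, ∀ s : Multiset C, (∀ y ∈ s, y ∈ B) → τm (x + s.sum) = am)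
    (habsorbp : ∀ x ∈ A, ∀ s : Multiset C, (∀ y ∈ s, y ∈ B) → τp (x + s.sum) = ap)
    (hBm : ∀ s : Multiset C, s ≠ 0 → (∀ y ∈ s, y ∈ B) → τm s.sum = bm)
    (hBp : ∀ s : Multiset C, s ≠ 0 → (∀ y ∈ s, y ∈ B) → τp s.sum = bp)
    (l : List C) (n : ℕ) (hlen : l.length = n) (hn : 1 ≤ n)
    (i₀ : ℕ) (hi₀ : i₀ ∈ Finset.Icc 1 n) (hA : l.getD (i₀ - 1) 0 ∈ A)
    (hB : ∀ j ∈ Finset.Icc 1 n, j ≠ i₀ → l.getD (j - 1) 0 ∈ B) :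
    Ucoef τm τp l
      = (-1) ^ (i₀ - 1) / (((n - i₀).factorial : ℚ) * ((i₀ - 1).factorial : ℚ)) := by
  subst hlen
  rw [Finset.mem_Icc] at hi₀
  obtain ⟨hi1, hi2⟩ := hi₀
  have hi : i₀ - 1 < l.length := by omega
  set l1 := l.take (i₀ - 1) with hl1
  set l2 := l.drop i₀ with hl2
  set x := l[i₀ - 1]'hi with hxdef
  have hx : x ∈ A := by
    rw [List.getD_eq_getElem l 0 hi] at hA
    exact hA
  have hd : l.drop (i₀ - 1) = x :: l2 := by
    rw [List.drop_eq_getElem_cons hi, show i₀ - 1 + 1 = i₀ from by omega]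
  have hsplit : l = l1 ++ x :: l2 := by
    have h0 := (List.take_append_drop (i₀ - 1) l).symm
    rw [hd] at h0
    exact h0
  have hl1len : l1.length = i₀ - 1 := by
    rw [hl1, List.length_take]
    omega
  have hl2len : l2.length = l.length - i₀ := by
    rw [hl2, List.length_drop]
  have hl1B : ∀ y ∈ l1, y ∈ B := by
    intro y hy
    obtain ⟨k, hk, hky⟩ := List.mem_iff_getElem.1 hy
    have hk1 : k < i₀ - 1 := by rwa [hl1len] at hk
    have hkl : k < l.length := by omega
    have e1 : l1[k]'hk = l[k]'hkl := List.getElem_take ..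
    have := hB (k + 1) (by rw [Finset.mem_Icc]; omega) (by omega)
    rw [show k + 1 - 1 = k from by omega, List.getD_eq_getElem l 0 hkl] at this
    rw [← hky, e1]
    exact this
  have hl2B : ∀ y ∈ l2, y ∈ B := by
    intro y hy
    obtain ⟨k, hk, hky⟩ := List.mem_iff_getElem.1 hy
    have hk1 : k < l.length - i₀ := by rwa [hl2len] at hk
    have hkl : i₀ + k < l.length := by omega
    have e1 : l2[k]'hk = l[i₀ + k]'hkl := List.getElem_drop ..
    have := hB (i₀ + k + 1) (by rw [Finset.mem_Icc]; omega) (by omega)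
    rw [show i₀ + k + 1 - 1 = i₀ + k from by omega, List.getD_eq_getElem l 0 hkl] at this
    rw [← hky, e1]
    exact this
  have hBone : ∀ y ∈ B, τm y = bm := by
    intro y hy
    have := tauB hBm [y] (by simp) (by simpa using hy)
    simpa using this
  have hxm : τm x = am := by
    have := habsorbm x hx 0 (by simp)
    simpa using this
  have hlsum : τp l.sum = ap := by
    rw [hsplit, List.sum_append, List.sum_cons]
    exact tauA habsorbp x hx l1 l2 hl1B hl2B
  -- the predicate on compositions
  set Pred : Composition l.length → Prop :=
    fun c => ∃ B1 B2 : List ℕ, c.blocks = B1 ++ 1 :: B2 ∧ B1.sum = i₀ - 1 with hPred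
  haveI : DecidablePred Pred := fun c => Classical.propDecidable _
  rw [Ucoef]
  refine ((Finset.sum_filter_of_ne (p := Pred) ?_).symm).trans ?_
  · -- vanishing off the predicate
    intro c _ hne
    by_contra hnp
    apply hne
    refine Finset.sum_eq_zero fun c' _ => ?_
    rw [if_neg]
    rintro ⟨hperm, -⟩
    apply hnp
    have hflat : (l.splitWrtComposition c).flatten = l1 ++ x :: l2 := by
      rw [List.flatten_splitWrtComposition]
      exact hsplit
    obtain ⟨P', m1, m2, Q', hbs, hP', hQ'⟩ := split_point _ _ _ _ hflat
    have hmid : (m1 ++ x :: m2) ∈ l.splitWrtComposition c := by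
      rw [hbs]
      simp
    have hτx : τm x = τm (m1 ++ x :: m2).sum := hperm _ hmid x (by simp)
    have hm1 : m1 = [] := by
      cases m1 with
      | nil => rfl
      | cons y t =>
        have hyB : y ∈ B := by
          apply hl1B
          rw [← hP']
          simp
        have hτy : τm y = τm (y :: t ++ x :: m2).sum := hperm _ hmid y (by simp)
        rw [hBone y hyB] at hτy
        rw [hxm] at hτx
        rw [← hτy] at hτx
        exact absurd hτx.symm (ne_of_lt hm)
    have hm2 : m2 = [] := by
      cases m2 with
      | nil => rfl
      | cons y t =>
        have hyB : y ∈ B := by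
          apply hl2B
          rw [← hQ']
          simp
        have hτy : τm y = τm (m1 ++ x :: y :: t).sum := hperm _ hmid y (by simp)
        rw [hBone y hyB] at hτy
        rw [hxm] at hτx
        rw [← hτy] at hτx
        exact absurd hτx.symm (ne_of_lt hm)
    subst hm1
    subst hm2
    refine ⟨P'.map List.length, Q'.map List.length, ?_, ?_⟩
    · rw [← List.map_length_splitWrtComposition l c, hbs]
      simp
    · have : (P'.map List.length).sum = P'.flatten.length := List.length_flatten.symm
      rw [this]
      simp only [List.nil_append, List.append_nil] at hP'
      rw [hP', hl1len]
  -- main computation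
  have hGsum : ∑ pr : Composition (i₀ - 1) × Composition (l.length - i₀),
      ((if pr.2.length ≤ 1 then (-1 : ℚ) ^ pr.1.length else 0) *
        ((pr.1.blocks.map fun b => ((b.factorial : ℚ))⁻¹).prod *
         (pr.2.blocks.map fun b => ((b.factorial : ℚ))⁻¹).prod))
      = (-1) ^ (i₀ - 1) / (((l.length - i₀).factorial : ℚ) * (((i₀ - 1).factorial : ℚ))) := by
    rw [Fintype.sum_prod_type]
    have hstep : ∀ cb : Composition (i₀ - 1),
        (∑ ca : Composition (l.length - i₀),
          ((if ca.length ≤ 1 then (-1 : ℚ) ^ cb.length else 0) *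
            ((cb.blocks.map fun b => ((b.factorial : ℚ))⁻¹).prod *
             (ca.blocks.map fun b => ((b.factorial : ℚ))⁻¹).prod)))
        = ((-1 : ℚ) ^ cb.length * (cb.blocks.map fun b => ((b.factorial : ℚ))⁻¹).prod)
            * (((l.length - i₀).factorial : ℚ))⁻¹ := by
      intro cb
      rw [← shortComp (l.length - i₀), Finset.mul_sum]
      refine Finset.sum_congr rfl fun ca _ => ?_
      by_cases h : ca.length ≤ 1
      · rw [if_pos h, if_pos h]; ring
      · rw [if_neg h, if_neg h]; ring
    rw [Finset.sum_congr rfl fun cb _ => hstep cb, ← Finset.sum_mul]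
    have hEw := Ew_eq (i₀ - 1)
    rw [Ew] at hEw
    rw [hEw, div_eq_mul_inv, div_eq_mul_inv, mul_inv]
    ring
  rw [← hGsum]
  -- value of the inner sum at compositions with a singleton block at i₀
  have hval : ∀ (cb : Composition (i₀ - 1)) (ca : Composition (l.length - i₀))
      (c : Composition l.length), c.blocks = cb.blocks ++ 1 :: ca.blocks →
      (∑ c' : Composition c.length,
        if (∀ blk ∈ l.splitWrtComposition c, ∀ y ∈ blk, τm y = τm blk.sum) ∧
            (∀ gblk ∈ ((l.splitWrtComposition c).map List.sum).splitWrtComposition c',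
              τp gblk.sum = τp l.sum)
        then ((-1) ^ (c'.length - 1) / (c'.length : ℚ)) *
            ((((l.splitWrtComposition c).map List.sum).splitWrtComposition c').map
              (Scoef τm τp)).prod *
            ((l.splitWrtComposition c).map fun blk => ((blk.length.factorial : ℚ))⁻¹).prod
        else 0)
      = (if ca.length ≤ 1 then (-1 : ℚ) ^ cb.length else 0) *
          ((cb.blocks.map fun b => ((b.factorial : ℚ))⁻¹).prod *
           (ca.blocks.map fun b => ((b.factorial : ℚ))⁻¹).prod) := by
    intro cb ca c hcblocks
    have hB1sum : cb.blocks.sum = i₀ - 1 := cb.blocks_sum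
    have hB2sum : ca.blocks.sum = l.length - i₀ := ca.blocks_sum
    set P' := l1.splitWrtCompositionAux cb.blocks with hP'def
    set Q' := l2.splitWrtCompositionAux ca.blocks with hQ'def
    have hbs : l.splitWrtComposition c = P' ++ [x] :: Q' := by
      show l.splitWrtCompositionAux c.blocks = _
      rw [hcblocks, SA_append, hB1sum, ← hl1, hd, List.splitWrtCompositionAux_cons]
      simp
      rfl
    have hP'len : P'.length = cb.length := by
      rw [hP'def, List.length_splitWrtCompositionAux]
    have hQ'len : Q'.length = ca.length := by
      rw [hQ'def, List.length_splitWrtCompositionAux]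
    have hP'ne : ∀ b ∈ P', b ≠ [] :=
      SA_block_ne_nil (fun a ha => cb.blocks_pos ha) (le_of_eq (by rw [hB1sum, hl1len]))
    have hQ'ne : ∀ b ∈ Q', b ≠ [] :=
      SA_block_ne_nil (fun a ha => ca.blocks_pos ha) (le_of_eq (by rw [hB2sum, hl2len]))
    have hP'flat : P'.flatten = l1 :=
      List.flatten_splitWrtCompositionAux (by rw [hB1sum, hl1len])
    have hQ'flat : Q'.flatten = l2 :=
      List.flatten_splitWrtCompositionAux (by rw [hB2sum, hl2len])
    have hP'B : ∀ b ∈ P', ∀ y ∈ b, y ∈ B := fun b hb y hy =>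
      hl1B y (hP'flat ▸ List.mem_flatten.2 ⟨b, hb, hy⟩)
    have hQ'B : ∀ b ∈ Q', ∀ y ∈ b, y ∈ B := fun b hb y hy =>
      hl2B y (hQ'flat ▸ List.mem_flatten.2 ⟨b, hb, hy⟩)
    have hm0 : 0 < c.length := c.length_pos_of_pos (by omega)
    have hβ : (l.splitWrtComposition c).map List.sum
        = (P' ++ [x] :: Q').map List.sum := by rw [hbs]
    have hβ' : (l.splitWrtComposition c).map List.sum
        = P'.map List.sum ++ x :: Q'.map List.sum := by rw [hbs]; simp
    have hβlen : ((l.splitWrtComposition c).map List.sum).length = c.length := by simp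
    have hβsum : ((l.splitWrtComposition c).map List.sum).sum = l.sum := by
      rw [← List.sum_flatten, List.flatten_splitWrtComposition]
    refine (Fintype.sum_eq_single (Composition.single c.length hm0) ?_).trans ?_
    · -- other compositions contribute 0
      intro c' hne
      have hlenne : c'.length ≠ 1 := fun hl =>
        hne ((Composition.eq_single_iff_length hm0).2 hl)
      rw [if_neg]
      rintro ⟨-, hγ⟩
      have hflatγ : (((l.splitWrtComposition c).map List.sum).splitWrtComposition c').flatten
          = P'.map List.sum ++ x :: Q'.map List.sum := by
        rw [show (((l.splitWrtComposition c).map List.sum).splitWrtComposition c').flatten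
            = (l.splitWrtComposition c).map List.sum from
          List.flatten_splitWrtCompositionAux (by rw [c'.blocks_sum, hβlen])]
        exact hβ'
      obtain ⟨GP, g1, g2, GQ, hgs, hGP, hGQ⟩ := split_point _ _ _ _ hflatγ
      have hgblk_ne : ∀ b ∈ ((l.splitWrtComposition c).map List.sum).splitWrtComposition c',
          b ≠ [] := by
        refine SA_block_ne_nil (fun a ha => c'.blocks_pos ha) ?_
        rw [c'.blocks_sum, hβlen]
      have hcase : GP ≠ [] ∨ GQ ≠ [] := by
        by_contra hno
        push_neg at hno
        have hone : (((l.splitWrtComposition c).map List.sum).splitWrtComposition c').length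
            = 1 := by
          rw [hgs, hno.1, hno.2]
          simp
        rw [List.length_splitWrtComposition] at hone
        exact hlenne hone
      have hbp : ∀ b : List C, b ≠ [] →
          (∀ y ∈ b, y ∈ P'.map List.sum ∨ y ∈ Q'.map List.sum) → τp b.sum = bp := by
        intro b hbne hmem
        have hrep : ∀ y ∈ b, ∃ u : List C, u ≠ [] ∧ (∀ z ∈ u, z ∈ B) ∧ u.sum = y := by
          intro y hy
          rcases hmem y hy with h | h
          · obtain ⟨blk, hblk, rfl⟩ := List.mem_map.1 h
            exact ⟨blk, hP'ne blk hblk, hP'B blk hblk, rfl⟩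
          · obtain ⟨blk, hblk, rfl⟩ := List.mem_map.1 h
            exact ⟨blk, hQ'ne blk hblk, hQ'B blk hblk, rfl⟩
        obtain ⟨u, hu1, hu2, hu3⟩ := exists_B_rep b hbne hrep
        rw [← hu3]
        exact tauB hBp u hu1 hu2
      rcases hcase with hGPne | hGQne
      · obtain ⟨b, hbGP⟩ := List.exists_mem_of_ne_nil GP hGPne
        have hbmem : b ∈ ((l.splitWrtComposition c).map List.sum).splitWrtComposition c' := by
          rw [hgs]
          exact List.mem_append_left _ hbGP
        have h1 := hγ b hbmem
        rw [hlsum] at h1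
        have h2 : τp b.sum = bp := by
          refine hbp b (hgblk_ne b hbmem) ?_
          intro y hy
          left
          have hyf : y ∈ GP.flatten := List.mem_flatten.2 ⟨b, hbGP, hy⟩
          exact hGP ▸ List.mem_append_left _ hyf
        rw [h1] at h2
        exact absurd h2 (ne_of_lt hp)
      · obtain ⟨b, hbGQ⟩ := List.exists_mem_of_ne_nil GQ hGQne
        have hbmem : b ∈ ((l.splitWrtComposition c).map List.sum).splitWrtComposition c' := by
          rw [hgs]
          exact List.mem_append_right _ (List.mem_cons_of_mem _ hbGQ)
        have h1 := hγ b hbmem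
        rw [hlsum] at h1
        have h2 : τp b.sum = bp := by
          refine hbp b (hgblk_ne b hbmem) ?_
          intro y hy
          right
          have hyf : y ∈ GQ.flatten := List.mem_flatten.2 ⟨b, hbGQ, hy⟩
          exact hGQ ▸ List.mem_append_right _ hyf
        rw [h1] at h2
        exact absurd h2 (ne_of_lt hp)
    · -- value at the single composition
      have hcond1 : ∀ blk ∈ l.splitWrtComposition c, ∀ y ∈ blk, τm y = τm blk.sum := by
        intro blk hblk y hy
        rw [hbs] at hblk
        rcases List.mem_append.1 hblk with h | h
        · rw [hBone y (hP'B blk h y hy), tauB hBm blk (hP'ne blk h) (hP'B blk h)]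
        · rcases List.mem_cons.1 h with rfl | h
          · have hy' : y = x := by simpa using hy
            rw [hy']
            have hs1 : ([x] : List C).sum = x := by simp
            rw [hs1]
          · rw [hBone y (hQ'B blk h y hy), tauB hBm blk (hQ'ne blk h) (hQ'B blk h)]
      have hsing : ((l.splitWrtComposition c).map List.sum).splitWrtComposition
          (Composition.single c.length hm0) = [(l.splitWrtComposition c).map List.sum] := by
        show List.splitWrtCompositionAux _ (Composition.single c.length hm0).blocks = _
        rw [Composition.single_blocks, List.splitWrtCompositionAux_cons, ← hβlen]
        simp [List.splitWrtCompositionAux]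
      have hcond2 : ∀ gblk ∈ ((l.splitWrtComposition c).map List.sum).splitWrtComposition
          (Composition.single c.length hm0), τp gblk.sum = τp l.sum := by
        rw [hsing]
        intro gblk hg
        rw [List.mem_singleton] at hg
        subst hg
        rw [hβsum]
      rw [if_pos ⟨hcond1, hcond2⟩, hsing, Composition.single_length]
      have hS : Scoef τm τp ((l.splitWrtComposition c).map List.sum)
          = if ca.length ≤ 1 then (-1 : ℚ) ^ cb.length else 0 := by
        rw [hβ, scoef_eval hm hp habsorbm habsorbp hBm hBp x hx P' Q' hP'ne hP'B hQ'ne hQ'B,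
          hP'len, hQ'len]
      have hW : ((l.splitWrtComposition c).map fun blk => ((blk.length.factorial : ℚ))⁻¹).prod
          = (cb.blocks.map fun b => ((b.factorial : ℚ))⁻¹).prod *
            (ca.blocks.map fun b => ((b.factorial : ℚ))⁻¹).prod := by
        have h1 : ((l.splitWrtComposition c).map fun blk => ((blk.length.factorial : ℚ))⁻¹)
            = ((l.splitWrtComposition c).map List.length).map
                (fun b => ((b.factorial : ℚ))⁻¹) := by
          rw [List.map_map]
          rfl
        rw [h1, List.map_length_splitWrtComposition l c, hcblocks]
        simp [List.prod_append, Nat.factorial]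
      simp only [List.map_cons, List.map_nil, List.prod_cons, List.prod_nil, mul_one]
      rw [hS, hW]
      norm_num
  refine (Finset.sum_bij
    (fun (pr : Composition (i₀ - 1) × Composition (l.length - i₀)) (_ : pr ∈ Finset.univ) =>
      (⟨pr.1.blocks ++ 1 :: pr.2.blocks, ?_, ?_⟩ : Composition l.length))
    ?_ ?_ ?_ ?_).symm
  · -- positivity
    intro a ha
    rcases List.mem_append.1 ha with h | h
    · exact pr.1.blocks_pos h
    · rcases List.mem_cons.1 h with rfl | h
      · omega
      · exact pr.2.blocks_pos h
  · -- sum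
    have h1 := pr.1.blocks_sum
    have h2 := pr.2.blocks_sum
    rw [List.sum_append, List.sum_cons, h1, h2]
    omega
  · -- maps into the filter
    intro pr _
    simp only [Finset.mem_filter, Finset.mem_univ, true_and, hPred]
    exact ⟨pr.1.blocks, pr.2.blocks, rfl, pr.1.blocks_sum⟩
  · -- injectivity
    intro pr hpr qr hqr h
    have hb := congrArg Composition.blocks h
    simp only at hb
    obtain ⟨h1, h2⟩ := concat_blocks_inj hb (fun a ha => pr.1.blocks_pos ha)
      (fun a ha => qr.1.blocks_pos ha) (by rw [pr.1.blocks_sum, qr.1.blocks_sum])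
    obtain ⟨cb, ca⟩ := pr
    obtain ⟨cb', ca'⟩ := qr
    simp only at h1 h2
    have e1 : cb = cb' := Composition.ext h1
    have e2 : ca = ca' := Composition.ext h2
    rw [e1, e2]
  · -- surjectivity
    intro c hc
    simp only [Finset.mem_filter, Finset.mem_univ, true_and, hPred] at hc
    obtain ⟨B1, B2, hb, hs1⟩ := hc
    have hpos1 : ∀ a ∈ B1, 0 < a := fun a ha =>
      c.blocks_pos (by rw [hb]; exact List.mem_append_left _ ha)
    have hpos2 : ∀ a ∈ B2, 0 < a := fun a ha =>
      c.blocks_pos (by rw [hb]; exact List.mem_append_right _ (List.mem_cons_of_mem _ ha))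
    have hs2 : B2.sum = l.length - i₀ := by
      have := c.blocks_sum
      rw [hb, List.sum_append, List.sum_cons] at this
      omega
    refine ⟨⟨⟨B1, fun ha => hpos1 _ ha, hs1⟩, ⟨B2, fun ha => hpos2 _ ha, hs2⟩⟩,
      Finset.mem_univ _, ?_⟩
    exact Composition.ext hb.symm
  · -- values
    intro pr _
    refine (hval pr.1 pr.2 _ ?_).symm
    rfl

end Thm
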